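/- Let A, B be n×n positive definite complex matrices and let m, m', M, M' be positive reals satisfying either m'·I ≤ A ≤ m·I < M·I ≤ B ≤ M'·I or m'·I ≤ B ≤ m·I < M·I ≤ A ≤ M'·I in the Loewner order. If 1/2 < v < 1, then A∇_v B ≥ 2(1 − v)(A∇B − A#B) + r₁(A#B − 2(A#_{3/4}B) + B) + K(h^{1/4}, 2)^{r̂₁} · (A#_v B) in the Loewner order, where h = M/m, r = min{v, 1 − v}, r₁ = min{2r, 1 − 2r} and r̂₁ = min{2r₁, 1 − 2r₁}. -/

import Mathlib

open Matrix
open scoped ComplexOrder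

/-- Real power of a matrix, defined for Hermitian matrices via the spectral
decomposition (functional calculus); junk value otherwise. -/
noncomputable def mrpow {n : ℕ} (A : Matrix (Fin n) (Fin n) ℂ) (t : ℝ) :
    Matrix (Fin n) (Fin n) ℂ :=
  if h : A.IsHermitian then
    (h.eigenvectorUnitary : Matrix (Fin n) (Fin n) ℂ)
      * Matrix.diagonal (fun i => ((h.eigenvalues i ^ t : ℝ) : ℂ))
      * star (h.eigenvectorUnitary : Matrix (Fin n) (Fin n) ℂ)
  else A

/-- Weighted arithmetic mean `A ∇_v B = (1 - v) A + v B`. -/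
noncomputable def anabla {n : ℕ} (v : ℝ) (A B : Matrix (Fin n) (Fin n) ℂ) :
    Matrix (Fin n) (Fin n) ℂ :=
  ((1 - v : ℝ) : ℂ) • A + ((v : ℝ) : ℂ) • B

/-- Weighted geometric mean `A #_v B = A^{1/2} (A^{-1/2} B A^{-1/2})^v A^{1/2}`. -/
noncomputable def asharp {n : ℕ} (v : ℝ) (A B : Matrix (Fin n) (Fin n) ℂ) :
    Matrix (Fin n) (Fin n) ℂ :=
  mrpow A (1 / 2) * mrpow (mrpow A (-(1 / 2)) * B * mrpow A (-(1 / 2))) v * mrpow A (1 / 2)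

/-- Heinz operator mean `H_v(A, B) = (A #_v B + A #_{1-v} B) / 2`. -/
noncomputable def heinz {n : ℕ} (v : ℝ) (A B : Matrix (Fin n) (Fin n) ℂ) :
    Matrix (Fin n) (Fin n) ℂ :=
  ((1 / 2 : ℝ) : ℂ) • (asharp v A B + asharp (1 - v) A B)

/-- The Loewner order: `loewner X Y` iff `Y - X` is positive semidefinite. -/
def loewner {n : ℕ} (X Y : Matrix (Fin n) (Fin n) ℂ) : Prop := (Y - X).PosSemidef

/-- The Kantorovich constant `K(t, 2) = (t + 1)^2 / (4 t)`. -/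
noncomputable def Kant (t : ℝ) : ℝ := (t + 1) ^ 2 / (4 * t)

/-!
Congruence by `A^{-1/2}` turns every term into `A^{1/2} f(T) A^{1/2}` for a scalar function `f`
of `T = A^{-1/2} B A^{-1/2}`, so the matrix inequality follows from the scalar one on the
spectrum of `T`, which the order hypotheses place in `(0, 1/h] ∪ [h, ∞)`.

For the scalar inequality, subtracting the two correction terms from `(1 - v) + v t` leaves a
weighted arithmetic mean of `t^{k/4}` and `t^{(k+1)/4}` (`k = 2` for `v ≤ 3/4`, `k = 3`
otherwise) whose weighted geometric mean is `t^v`, with weights `(1 - u, u)`, `u = 4v - k`,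
and `min u (1 - u) = r̂₁`. Young's inequality refined by the Kantorovich constant, itself the
weighted AM-GM inequality for `a` and `(a + b) / 2`, bounds this mean below by
`K(t^{1/4})^{r̂₁} t^v`. Finally `K` is increasing on `[1, ∞)` and invariant under `t ↦ 1/t`,
so `K(t^{1/4}) ≥ K(h^{1/4})` on the spectrum.
-/

open scoped MatrixOrder

lemma Kant_div {a b : ℝ} (ha : 0 < a) (hb : 0 < b) :
    Kant (b / a) = ((a + b) / 2) ^ 2 / (a * b) := by
  unfold Kant; field_simp; ring

lemma one_le_Kant {s : ℝ} (hs : 0 < s) : 1 ≤ Kant s := by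
  rw [Kant, le_div_iff₀ (by positivity)]
  nlinarith [sq_nonneg (s - 1)]

lemma Kant_inv (s : ℝ) : Kant s⁻¹ = Kant s := by
  rcases eq_or_ne s 0 with rfl | hs
  · simp
  · unfold Kant; field_simp; ring

lemma Kant_monotoneOn : MonotoneOn Kant (Set.Ici 1) := by
  intro s (hs : 1 ≤ s) t (ht : 1 ≤ t) hst
  rw [Kant, Kant, div_le_div_iff₀ (by positivity) (by positivity)]
  nlinarith [mul_nonneg (sub_nonneg.2 hst) (sub_nonneg.2 (one_le_mul_of_one_le_of_one_le hs ht))]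

lemma Kant_rpow_mul_le_of_le_half {a b u : ℝ} (ha : 0 < a) (hb : 0 < b) (hu : 0 ≤ u)
    (hu2 : u ≤ 1 / 2) :
    Kant (b / a) ^ u * (a ^ (1 - u) * b ^ u) ≤ (1 - u) * a + u * b := by
  have hm : 0 < (a + b) / 2 := by positivity
  have hK : Kant (b / a) ^ u * (a ^ (1 - u) * b ^ u)
      = a ^ (1 - 2 * u) * ((a + b) / 2) ^ (2 * u) := by
    have ha' : a ^ (1 - u) = a ^ (1 - 2 * u) * a ^ u := by
      rw [← Real.rpow_add ha]; ring_nf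
    rw [Kant_div ha hb, Real.div_rpow (by positivity) (by positivity), Real.mul_rpow ha.le hb.le,
      ← Real.rpow_natCast, ← Real.rpow_mul hm.le, ha']
    field_simp
    push_cast; ring_nf
  rw [hK]
  calc a ^ (1 - 2 * u) * ((a + b) / 2) ^ (2 * u) ≤ (1 - 2 * u) * a + 2 * u * ((a + b) / 2) :=
        Real.geom_mean_le_arith_mean2_weighted (by linarith) (by linarith) ha.le hm.le (by ring)
    _ = (1 - u) * a + u * b := by ring

lemma Kant_rpow_min_mul_le {a b u : ℝ} (ha : 0 < a) (hb : 0 < b) (hu0 : 0 ≤ u) (hu1 : u ≤ 1) :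
    Kant (b / a) ^ min u (1 - u) * (a ^ (1 - u) * b ^ u) ≤ (1 - u) * a + u * b := by
  rcases le_total u (1 / 2) with hu | hu
  · rw [min_eq_left (by linarith)]
    exact Kant_rpow_mul_le_of_le_half ha hb hu0 hu
  · have key := Kant_rpow_mul_le_of_le_half hb ha (u := 1 - u) (by linarith) (by linarith)
    rw [← inv_div, Kant_inv, sub_sub_cancel] at key
    rw [min_eq_right (by linarith)]
    linarith [mul_comm (a ^ (1 - u)) (b ^ u)]

lemma Kant_rpow_min_mul_rpow_le {x u : ℝ} (hx : 0 < x) (k : ℕ) (hu0 : 0 ≤ u) (hu1 : u ≤ 1) :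
    Kant x ^ min u (1 - u) * x ^ (k + u) ≤ (1 - u) * x ^ k + u * x ^ (k + 1) := by
  have hpow : (x ^ k) ^ (1 - u) * (x ^ k * x) ^ u = x ^ ((k : ℝ) + u) := by
    rw [Real.mul_rpow (by positivity) hx.le, ← mul_assoc, ← Real.rpow_add (by positivity),
      sub_add_cancel, Real.rpow_one, Real.rpow_add hx, Real.rpow_natCast]
  have key := Kant_rpow_min_mul_le (pow_pos hx k) (pow_pos hx (k + 1)) hu0 hu1
  rwa [pow_succ, mul_div_cancel_left₀ _ (pow_ne_zero k hx.ne'), hpow] at key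

lemma Kant_le_Kant_of_le_or_le_inv {s t : ℝ} (hs : 1 ≤ s) (ht : 0 < t)
    (hst : s ≤ t ∨ t ≤ s⁻¹) : Kant s ≤ Kant t := by
  rcases hst with hst | hts
  · exact Kant_monotoneOn hs (hs.trans hst) hst
  · rw [← Kant_inv t]
    exact Kant_monotoneOn hs (one_le_inv_iff₀.2 ⟨ht, hts.trans (inv_le_one_of_one_le₀ hs)⟩)
      (le_inv_comm₀ ht (by positivity) |>.1 hts)

lemma refined_young_pow {x s v r1 rh1 : ℝ} (hx : 0 < x) (hs : 0 < s) (hsx : Kant s ≤ Kant x)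
    (hv0 : 1 / 2 < v) (hv1 : v < 1) (hr1 : r1 = min (2 * (1 - v)) (1 - 2 * (1 - v)))
    (hrh1 : rh1 = min (2 * r1) (1 - 2 * r1)) :
    2 * (1 - v) * (1 / 2 + 1 / 2 * x ^ 4 - x ^ 2) + r1 * (x ^ 2 - 2 * x ^ 3 + x ^ 4)
      + Kant s ^ rh1 * x ^ (4 * v) ≤ (1 - v) + v * x ^ 4 := by
  obtain ⟨k, hu0, hu1, hrh1', hmean⟩ : ∃ k : ℕ, 0 ≤ 4 * v - k ∧ 4 * v - k ≤ 1 ∧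
      rh1 = min (4 * v - k) (1 - (4 * v - k)) ∧
      (1 - v) + v * x ^ 4 - (2 * (1 - v) * (1 / 2 + 1 / 2 * x ^ 4 - x ^ 2)
        + r1 * (x ^ 2 - 2 * x ^ 3 + x ^ 4))
        = (1 - (4 * v - k)) * x ^ k + (4 * v - k) * x ^ (k + 1) := by
    rcases le_total v (3 / 4) with hv | hv
    · have hr1' : r1 = 2 * v - 1 := by rw [hr1, min_eq_right (by linarith)]; ring
      refine ⟨2, by norm_num; linarith, by norm_num; linarith, ?_, ?_⟩
      · rw [hrh1, hr1']; ring_nf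
      · rw [hr1']; ring
    · have hr1' : r1 = 2 - 2 * v := by rw [hr1, min_eq_left (by linarith)]; ring
      refine ⟨3, by norm_num; linarith, by norm_num; linarith, ?_, ?_⟩
      · rw [hrh1, hr1', min_comm]; ring_nf
      · rw [hr1']; ring
  have key := Kant_rpow_min_mul_rpow_le hx k hu0 hu1
  rw [add_sub_cancel, ← hrh1'] at key
  have hK : Kant s ^ rh1 ≤ Kant x ^ rh1 :=
    Real.rpow_le_rpow (zero_le_one.trans (one_le_Kant hs)) hsx (hrh1' ▸ le_min hu0 (by linarith))
  linarith [mul_le_mul_of_nonneg_right hK (Real.rpow_pos_of_pos hx (4 * v)).le]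

noncomputable def refinedYoungGap (v a b c t : ℝ) : ℝ :=
  (1 - v) + v * t - (a * (1 / 2 + 1 / 2 * t - t ^ (1 / 2 : ℝ))
    + b * (t ^ (1 / 2 : ℝ) - 2 * t ^ (3 / 4 : ℝ) + t) + c * t ^ v)

lemma refinedYoungGap_nonneg {t s v r1 rh1 : ℝ} (ht : 0 < t) (hs : 1 ≤ s)
    (hst : s ≤ t ∨ t ≤ s⁻¹) (hv0 : 1 / 2 < v) (hv1 : v < 1)
    (hr1 : r1 = min (2 * (1 - v)) (1 - 2 * (1 - v)))
    (hrh1 : rh1 = min (2 * r1) (1 - 2 * r1)) :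
    0 ≤ refinedYoungGap v (2 * (1 - v)) r1 (Kant (s ^ (1 / 4 : ℝ)) ^ rh1) t := by
  obtain ⟨x, hx, rfl⟩ : ∃ x, 0 < x ∧ x ^ 4 = t :=
    ⟨t ^ (1 / 4 : ℝ), by positivity, by
      rw [← Real.rpow_natCast, ← Real.rpow_mul ht.le]; norm_num⟩
  have hpow (p : ℝ) : (x ^ 4) ^ p = x ^ (4 * p) := by
    rw [← Real.rpow_natCast_mul hx.le]; norm_num
  have hroot : (x ^ 4) ^ (1 / 4 : ℝ) = x := by rw [hpow]; norm_num
  have hsx : s ^ (1 / 4 : ℝ) ≤ x ∨ x ≤ (s ^ (1 / 4 : ℝ))⁻¹ := by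
    refine hst.imp (fun h ↦ ?_) (fun h ↦ ?_)
    · exact hroot ▸ Real.rpow_le_rpow (by positivity) h (by norm_num)
    · rw [← Real.inv_rpow (by positivity)]
      exact hroot ▸ Real.rpow_le_rpow (by positivity) h (by norm_num)
  have hK := Kant_le_Kant_of_le_or_le_inv (Real.one_le_rpow hs (by norm_num)) hx hsx
  have key := refined_young_pow hx (by positivity) hK hv0 hv1 hr1 hrh1
  rw [refinedYoungGap, hpow, hpow, hpow]
  norm_num
  linarith

lemma div_smul_le_of_le_smul_of_smul_le {E : Type*} [AddCommGroup E] [PartialOrder E] [Module ℝ E]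
    [PosSMulMono ℝ E] {X Y e : E} {m M : ℝ} (hm : 0 < m) (hM : 0 ≤ M) (hX : X ≤ m • e)
    (hY : M • e ≤ Y) : (M / m) • X ≤ Y :=
  calc (M / m) • X ≤ (M / m) • (m • e) := smul_le_smul_of_nonneg_left hX (by positivity)
    _ = M • e := by rw [smul_smul, div_mul_cancel₀ _ hm.ne']
    _ ≤ Y := hY

lemma le_div_smul_of_le_smul_of_smul_le {E : Type*} [AddCommGroup E] [PartialOrder E] [Module ℝ E]
    [PosSMulMono ℝ E] {X Y e : E} {m M : ℝ} (hm : 0 ≤ m) (hM : 0 < M) (hX : X ≤ m • e)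
    (hY : M • e ≤ Y) : X ≤ (m / M) • Y :=
  calc X ≤ m • e := hX
    _ = (m / M) • (M • e) := by rw [smul_smul, div_mul_cancel₀ _ hM.ne']
    _ ≤ (m / M) • Y := smul_le_smul_of_nonneg_left hY (by positivity)

namespace Matrix

variable {n : ℕ} {A B T : Matrix (Fin n) (Fin n) ℂ}

lemma mrpow_eq_cfc (hT : T.IsHermitian) (s : ℝ) : mrpow T s = cfc (· ^ s : ℝ → ℝ) T := by
  rw [hT.cfc_eq, IsHermitian.cfc, mrpow, dif_pos hT, Unitary.conjStarAlgAut_apply]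
  rfl

lemma PosDef.mrpow_eq_rpow (hA : A.PosDef) (s : ℝ) : mrpow A s = A ^ s := by
  rw [mrpow_eq_cfc hA.isHermitian, CFC.rpow_eq_cfc_real hA.posSemidef.nonneg]

lemma PosDef.mrpow_mul_mrpow (hA : A.PosDef) (s t : ℝ) :
    mrpow A s * mrpow A t = mrpow A (s + t) := by
  simp only [hA.mrpow_eq_rpow, CFC.rpow_add hA.isUnit]

lemma PosDef.mrpow_half_mul_self (hA : A.PosDef) : mrpow A (1 / 2) * mrpow A (1 / 2) = A := by
  rw [hA.mrpow_mul_mrpow, add_halves, hA.mrpow_eq_rpow, CFC.rpow_one A hA.posSemidef.nonneg]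

lemma PosDef.mrpow_mul_mrpow_neg (hA : A.PosDef) (s : ℝ) : mrpow A s * mrpow A (-s) = 1 := by
  rw [hA.mrpow_mul_mrpow, add_neg_cancel, hA.mrpow_eq_rpow, CFC.rpow_zero A hA.posSemidef.nonneg]

lemma PosDef.mrpow_neg_mul_mrpow (hA : A.PosDef) (s : ℝ) : mrpow A (-s) * mrpow A s = 1 := by
  rw [hA.mrpow_mul_mrpow, neg_add_cancel, hA.mrpow_eq_rpow, CFC.rpow_zero A hA.posSemidef.nonneg]

lemma isSelfAdjoint_mrpow (hT : T.IsHermitian) (s : ℝ) : IsSelfAdjoint (mrpow T s) := by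
  rw [mrpow_eq_cfc hT]; exact cfc_predicate _ _

lemma PosDef.isHermitian_conj (hA : A.PosDef) (hB : B.IsHermitian) :
    (mrpow A (-(1 / 2)) * B * mrpow A (-(1 / 2))).IsHermitian := by
  have hQ := isSelfAdjoint_mrpow hA.isHermitian (-(1 / 2))
  have h := hB.isSelfAdjoint.conjugate (mrpow A (-(1 / 2)))
  rwa [hQ.star_eq] at h

lemma PosDef.asharp_eq (hA : A.PosDef) (hB : B.IsHermitian) (s : ℝ) :
    asharp s A B = mrpow A (1 / 2) * cfc (· ^ s : ℝ → ℝ)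
      (mrpow A (-(1 / 2)) * B * mrpow A (-(1 / 2))) * mrpow A (1 / 2) := by
  rw [asharp, mrpow_eq_cfc (hA.isHermitian_conj hB)]

lemma PosDef.anabla_sub_eq (hA : A.PosDef) (hB : B.IsHermitian) (v a b c : ℝ) :
    anabla v A B - (((a : ℝ) : ℂ) • (anabla (1 / 2) A B - asharp (1 / 2) A B)
      + ((b : ℝ) : ℂ) • (asharp (1 / 2) A B - (2 : ℂ) • asharp (3 / 4) A B + B)
      + ((c : ℝ) : ℂ) • asharp v A B)
    = mrpow A (1 / 2) * cfc (refinedYoungGap v a b c)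
        (mrpow A (-(1 / 2)) * B * mrpow A (-(1 / 2))) * mrpow A (1 / 2) := by
  have hT : IsSelfAdjoint (mrpow A (-(1 / 2)) * B * mrpow A (-(1 / 2))) :=
    hA.isHermitian_conj hB
  unfold refinedYoungGap
  simp only [hA.asharp_eq hB]
  -- every function is continuous on the finite spectrum of a matrix
  simp (disch := first | exact hT | exact finite_real_spectrum.continuousOn _) only
    [cfc_sub, cfc_add, cfc_const_mul, cfc_id', cfc_const, cfc_const_mul_id,
      Algebra.algebraMap_eq_smul_one]
  have hA' : A = mrpow A (1 / 2) * 1 * mrpow A (1 / 2) := by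
    rw [mul_one, hA.mrpow_half_mul_self]
  have hB' :
      B = mrpow A (1 / 2) * (mrpow A (-(1 / 2)) * B * mrpow A (-(1 / 2))) * mrpow A (1 / 2) := by
    simp only [← mul_assoc, hA.mrpow_mul_mrpow_neg, one_mul]
    rw [mul_assoc, hA.mrpow_neg_mul_mrpow, mul_one]
  generalize mrpow A (1 / 2) = P at hA' hB' ⊢
  generalize mrpow A (-(1 / 2)) * B * mrpow A (-(1 / 2)) = T at hB' ⊢
  subst hA' hB'
  simp only [anabla, mul_sub, mul_add, sub_mul, add_mul, mul_smul_comm, smul_mul_assoc,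
    Complex.coe_smul, two_smul]
  module

lemma PosDef.mrpow_neg_half_conj_smul_self (hA : A.PosDef) (c : ℝ) :
    mrpow A (-(1 / 2)) * (c • A) * mrpow A (-(1 / 2)) = algebraMap ℝ _ c := by
  calc _ = c • (mrpow A (-(1 / 2)) * mrpow A (1 / 2)
          * (mrpow A (1 / 2) * mrpow A (-(1 / 2)))) := by
        rw [mul_smul_comm, smul_mul_assoc, mul_assoc _ (mrpow A (1 / 2)),
          ← mul_assoc (mrpow A (1 / 2)), hA.mrpow_half_mul_self, mul_assoc]
    _ = algebraMap ℝ _ c := by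
        rw [hA.mrpow_neg_mul_mrpow, hA.mrpow_mul_mrpow_neg, one_mul,
          Algebra.algebraMap_eq_smul_one]

lemma PosDef.le_of_mem_spectrum_conj_of_smul_le (hA : A.PosDef) (hB : B.IsHermitian) {c : ℝ}
    (hc : c • A ≤ B) :
    ∀ t ∈ spectrum ℝ (mrpow A (-(1 / 2)) * B * mrpow A (-(1 / 2))), c ≤ t :=
  (algebraMap_le_iff_le_spectrum (hA.isHermitian_conj hB).isSelfAdjoint).1 <|
    hA.mrpow_neg_half_conj_smul_self c ▸
      (isSelfAdjoint_mrpow hA.isHermitian _).conjugate_le_conjugate hc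

lemma PosDef.le_of_mem_spectrum_conj_of_le_smul (hA : A.PosDef) (hB : B.IsHermitian) {c : ℝ}
    (hc : B ≤ c • A) :
    ∀ t ∈ spectrum ℝ (mrpow A (-(1 / 2)) * B * mrpow A (-(1 / 2))), t ≤ c :=
  (le_algebraMap_iff_spectrum_le (hA.isHermitian_conj hB).isSelfAdjoint).1 <|
    hA.mrpow_neg_half_conj_smul_self c ▸
      (isSelfAdjoint_mrpow hA.isHermitian _).conjugate_le_conjugate hc

lemma PosDef.pos_of_mem_spectrum_conj (hA : A.PosDef) (hB : B.PosDef) :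
    ∀ t ∈ spectrum ℝ (mrpow A (-(1 / 2)) * B * mrpow A (-(1 / 2))), 0 < t := fun _ ht ↦
  (IsStrictlyPositive.conjugate_of_isUnit_of_isSelfAdjoint B _
    (.of_mul_eq_one _ (hA.mrpow_neg_mul_mrpow _)) (isSelfAdjoint_mrpow hA.isHermitian _)
    hB.isStrictlyPositive).spectrum_pos ht

end Matrix

lemma loewner_iff_le {n : ℕ} {X Y : Matrix (Fin n) (Fin n) ℂ} : loewner X Y ↔ X ≤ Y :=
  Iff.rfl

theorem stmt_11_general {n : ℕ} (A B : Matrix (Fin n) (Fin n) ℂ) (m m' M M' v h r r1 rh1 : ℝ)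
    (hA : A.PosDef) (hB : B.PosDef)
    (hm : 0 < m) (hM : 0 < M) (hmM : m < M)
    (hcond : (loewner ((m' : ℂ) • 1) A ∧ loewner A ((m : ℂ) • 1) ∧
        loewner ((M : ℂ) • 1) B ∧ loewner B ((M' : ℂ) • 1)) ∨
      (loewner ((m' : ℂ) • 1) B ∧ loewner B ((m : ℂ) • 1) ∧
        loewner ((M : ℂ) • 1) A ∧ loewner A ((M' : ℂ) • 1)))
    (hh : h = M / m) (hr : r = min v (1 - v))
    (hr1 : r1 = min (2 * r) (1 - 2 * r)) (hrh1 : rh1 = min (2 * r1) (1 - 2 * r1))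
    (hv0 : 1 / 2 < v) (hv : v < 1) :
    loewner
      (((2 * (1 - v) : ℝ) : ℂ) • (anabla (1 / 2) A B - asharp (1 / 2) A B)
        + ((r1 : ℝ) : ℂ) • (asharp (1 / 2) A B - (2 : ℂ) • asharp (3 / 4) A B + B)
        + ((Kant (h ^ ((1 : ℝ) / 4)) ^ rh1 : ℝ) : ℂ) • asharp v A B)
      (anabla v A B) := by
  obtain rfl : r = 1 - v := by rw [hr, min_eq_right (by linarith)]
  have hh1 : 1 ≤ h := hh ▸ (one_le_div hm).2 hmM.le
  have hspec : ∀ t ∈ spectrum ℝ (mrpow A (-(1 / 2)) * B * mrpow A (-(1 / 2))),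
      h ≤ t ∨ t ≤ h⁻¹ := by
    simp only [loewner_iff_le, Complex.coe_smul] at hcond
    rcases hcond with ⟨-, hAm, hMB, -⟩ | ⟨-, hBm, hMA, -⟩
    · have hAB := div_smul_le_of_le_smul_of_smul_le hm hM.le hAm hMB
      exact fun t ht ↦ .inl (hh ▸ hA.le_of_mem_spectrum_conj_of_smul_le hB.isHermitian hAB t ht)
    · have hBA := le_div_smul_of_le_smul_of_smul_le hm.le hM hBm hMA
      rw [← inv_div, ← hh] at hBA
      exact fun t ht ↦ .inr (hA.le_of_mem_spectrum_conj_of_le_smul hB.isHermitian hBA t ht)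
  rw [loewner, ← nonneg_iff_posSemidef, hA.anabla_sub_eq hB.isHermitian]
  refine (isSelfAdjoint_mrpow hA.isHermitian _).conjugate_nonneg (cfc_nonneg fun t ht ↦ ?_)
  exact refinedYoungGap_nonneg (hA.pos_of_mem_spectrum_conj hB t ht) hh1 (hspec t ht) hv0 hv hr1
    hrh1

theorem stmt_11 {n : ℕ} (A B : Matrix (Fin n) (Fin n) ℂ) (m m' M M' v h r r1 rh1 : ℝ)
    (hA : A.PosDef) (hB : B.PosDef)
    (hm' : 0 < m') (hm : 0 < m) (hM : 0 < M) (hM' : 0 < M') (hmM : m < M)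
    (hcond : (loewner ((m' : ℂ) • 1) A ∧ loewner A ((m : ℂ) • 1) ∧
        loewner ((M : ℂ) • 1) B ∧ loewner B ((M' : ℂ) • 1)) ∨
      (loewner ((m' : ℂ) • 1) B ∧ loewner B ((m : ℂ) • 1) ∧
        loewner ((M : ℂ) • 1) A ∧ loewner A ((M' : ℂ) • 1)))
    (hh : h = M / m) (hr : r = min v (1 - v))
    (hr1 : r1 = min (2 * r) (1 - 2 * r)) (hrh1 : rh1 = min (2 * r1) (1 - 2 * r1))
    (hv0 : 1 / 2 < v) (hv : v < 1) :
    loewner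
      (((2 * (1 - v) : ℝ) : ℂ) • (anabla (1 / 2) A B - asharp (1 / 2) A B)
        + ((r1 : ℝ) : ℂ) • (asharp (1 / 2) A B - (2 : ℂ) • asharp (3 / 4) A B + B)
        + ((Kant (h ^ ((1 : ℝ) / 4)) ^ rh1 : ℝ) : ℂ) • asharp v A B)
      (anabla v A B) :=
  stmt_11_general A B m m' M M' v h r r1 rh1 hA hB hm hM hmM hcond hh hr hr1 hrh1 hv0 hv
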